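/- Suppose signals are bounded. Let (μ_k)_{k≥1} ⊆ (0,1) be a sequence of priors with μ_k → 1, and for each k let (φ₀^k, φ₁^k, σ_k) be a subgame perfect equilibrium of the stage game Γ(μ_k). Then Firm 0's equilibrium price converges to 1: the measures φ₀^k converge weakly to the Dirac measure at 1, i.e., for every ε > 0, φ₀^k([1−ε, 1]) → 1 as k → ∞. -/

import Mathlib

/-!
Bounded signals give every consumer a private belief of at least `α⁻ > 0`, so under the
prior `μ` her posterior on state 0 is at least `1 - (1 - μ) / (μ α⁻)`, which tends to `1` as
`μ → 1`. Whatever firm 1 charges, firm 0 therefore sells with probability one at any price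
below `2 b - 1`, where `b` is this bound, so its equilibrium profit tends to `1`. As a price
below `1 - ε` earns at most `1 - ε`, the profit is at most `1 - ε φ₀([0, 1 - ε))`, and this
forces `φ₀([1 - ε, 1]) → 1`.
-/

open MeasureTheory Set Filter Topology
open scoped ENNReal NNReal

noncomputable section

/-- The consumer's possible actions: buy product 0, buy product 1, or exit. -/
inductive CAction : Type
  | buy0 : CAction
  | buy1 : CAction
  | exit : CAction

instance : MeasurableSpace CAction := ⊤

/-- A signal structure `(F₀, F₁, S)`: two mutually absolutely continuous
probability measures on a measurable space `S`. -/
structure SignalStructure (S : Type) [MeasurableSpace S] : Type where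
  F0 : Measure S
  F1 : Measure S
  prob0 : IsProbabilityMeasure F0
  prob1 : IsProbabilityMeasure F1
  ac01 : F0 ≪ F1
  ac10 : F1 ≪ F0

namespace SignalStructure

variable {S : Type} [MeasurableSpace S]

/-- The reference measure `(F₀ + F₁)/2`. -/
def ref (𝒮 : SignalStructure S) : Measure S := (2 : ℝ≥0∞)⁻¹ • (𝒮.F0 + 𝒮.F1)

/-- Radon–Nikodym density of `F₀` with respect to `(F₀+F₁)/2`. -/
def f0 (𝒮 : SignalStructure S) : S → ℝ≥0∞ := 𝒮.F0.rnDeriv 𝒮.ref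

/-- Radon–Nikodym density of `F₁` with respect to `(F₀+F₁)/2`. -/
def f1 (𝒮 : SignalStructure S) : S → ℝ≥0∞ := 𝒮.F1.rnDeriv 𝒮.ref

/-- The private belief `p(s) = f₀(s)/(f₀(s)+f₁(s))`. -/
def p (𝒮 : SignalStructure S) (s : S) : ℝ :=
  (𝒮.f0 s).toReal / ((𝒮.f0 s).toReal + (𝒮.f1 s).toReal)

/-- `G₀(x) = F₀ {s | p(s) < x}`, the CDF of the private belief in state 0. -/
def G0 (𝒮 : SignalStructure S) (x : ℝ) : ℝ := (𝒮.F0 {s | 𝒮.p s < x}).toReal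

/-- `G₁(x) = F₁ {s | p(s) < x}`, the CDF of the private belief in state 1. -/
def G1 (𝒮 : SignalStructure S) (x : ℝ) : ℝ := (𝒮.F1 {s | 𝒮.p s < x}).toReal

/-- `α⁻ = inf {x | G(x) > 0}`. -/
def alphaLo (𝒮 : SignalStructure S) : ℝ := sInf {x | 0 < 𝒮.G0 x}

/-- `α⁺ = sup {x | G(x) < 1}`. -/
def alphaHi (𝒮 : SignalStructure S) : ℝ := sSup {x | 𝒮.G0 x < 1}

/-- Signals are bounded if `α⁻ > 0` and `α⁺ < 1`. -/
def Bounded (𝒮 : SignalStructure S) : Prop := 0 < 𝒮.alphaLo ∧ 𝒮.alphaHi < 1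

/-- Signals are unbounded if `α⁻ = 0` and `α⁺ = 1`. -/
def Unbounded (𝒮 : SignalStructure S) : Prop := 𝒮.alphaLo = 0 ∧ 𝒮.alphaHi = 1

/-- Assumption 1: `G₀, G₁` are differentiable on `(α⁻, α⁺)` with continuous
nonnegative derivatives `g₀, g₁ : [α⁻, α⁺] → ℝ₊`. -/
structure Assumption1 (𝒮 : SignalStructure S) (g0 g1 : ℝ → ℝ) : Prop where
  cont0 : ContinuousOn g0 (Icc 𝒮.alphaLo 𝒮.alphaHi)
  cont1 : ContinuousOn g1 (Icc 𝒮.alphaLo 𝒮.alphaHi)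
  nonneg0 : ∀ x ∈ Icc 𝒮.alphaLo 𝒮.alphaHi, 0 ≤ g0 x
  nonneg1 : ∀ x ∈ Icc 𝒮.alphaLo 𝒮.alphaHi, 0 ≤ g1 x
  hasDeriv0 : ∀ x ∈ Ioo 𝒮.alphaLo 𝒮.alphaHi, HasDerivAt 𝒮.G0 (g0 x) x
  hasDeriv1 : ∀ x ∈ Ioo 𝒮.alphaLo 𝒮.alphaHi, HasDerivAt 𝒮.G1 (g1 x) x

/-- The signal structure exhibits vanishing likelihood: `g₁(α⁻) = g₀(α⁺) = 0`. -/
def VanishingLikelihood (𝒮 : SignalStructure S) (g0 g1 : ℝ → ℝ) : Prop :=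
  g1 𝒮.alphaLo = 0 ∧ g0 𝒮.alphaHi = 0

end SignalStructure

/-- Bayesian posterior on state 0 from a prior `μ` and a private belief `q`:
`p_μ = μ q / (μ q + (1-μ)(1-q))`. -/
def posterior (μ q : ℝ) : ℝ := μ * q / (μ * q + (1 - μ) * (1 - q))

/-- The consumer's expected utility, given posterior `q` on state 0 and prices
`τ₀, τ₁`, from each action. -/
def cUtil (q τ0 τ1 : ℝ) : CAction → ℝ
  | CAction.buy0 => q - τ0
  | CAction.buy1 => (1 - q) - τ1
  | CAction.exit => 0

/-- A consumer pure strategy: maps the posted price pair and the signal to an action. -/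
abbrev CStrategy (S : Type) : Type := ℝ → ℝ → S → CAction

/-- A mixed price strategy of a firm: a Borel probability measure on `[0,1]`. -/
def IsPriceStrategy (φ : Measure ℝ) : Prop :=
  IsProbabilityMeasure φ ∧ φ (Icc (0:ℝ) 1) = 1

namespace SignalStructure

variable {S : Type} [MeasurableSpace S]

/-- The signal distribution under prior `μ`: the mixture `μ F₀ + (1-μ) F₁`. -/
def Fmix (𝒮 : SignalStructure S) (μ : ℝ) : Measure S :=
  ENNReal.ofReal μ • 𝒮.F0 + ENNReal.ofReal (1 - μ) • 𝒮.F1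

/-- The probability (under prior `μ`) that the consumer takes action `a` when the
pure prices `τ₀, τ₁` are posted. -/
def actProb (𝒮 : SignalStructure S) (μ : ℝ) (σ : CStrategy S) (τ0 τ1 : ℝ) (a : CAction) : ℝ :=
  (𝒮.Fmix μ {s | σ τ0 τ1 s = a}).toReal

/-- Firm 0's expected payoff in `Γ(μ)` under mixed strategies `φ₀, φ₁` and consumer
strategy `σ`. -/
def Pi0 (𝒮 : SignalStructure S) (μ : ℝ) (φ0 φ1 : Measure ℝ) (σ : CStrategy S) : ℝ :=
  ∫ τ, 𝒮.actProb μ σ τ.1 τ.2 CAction.buy0 * τ.1 ∂(φ0.prod φ1)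

/-- Firm 1's expected payoff in `Γ(μ)`. -/
def Pi1 (𝒮 : SignalStructure S) (μ : ℝ) (φ0 φ1 : Measure ℝ) (σ : CStrategy S) : ℝ :=
  ∫ τ, 𝒮.actProb μ σ τ.1 τ.2 CAction.buy1 * τ.2 ∂(φ0.prod φ1)

/-- The probability that the consumer takes action `a` under mixed price strategies. -/
def actProbMix (𝒮 : SignalStructure S) (μ : ℝ) (φ0 φ1 : Measure ℝ) (σ : CStrategy S)
    (a : CAction) : ℝ :=
  ∫ τ, 𝒮.actProb μ σ τ.1 τ.2 a ∂(φ0.prod φ1)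

/-- A subgame perfect equilibrium of the stage game `Γ(μ)`: the consumer strategy is a
best reply to every price pair, and each firm's mixed price strategy maximizes its
expected payoff given the opponent's strategy and the consumer's strategy. -/
structure IsSPE (𝒮 : SignalStructure S) (μ : ℝ) (φ0 φ1 : Measure ℝ) (σ : CStrategy S) :
    Prop where
  strat0 : IsPriceStrategy φ0
  strat1 : IsPriceStrategy φ1
  meas : ∀ τ0 τ1, Measurable (σ τ0 τ1)
  consumerBR : ∀ τ0 ∈ Icc (0:ℝ) 1, ∀ τ1 ∈ Icc (0:ℝ) 1,
    ∀ᵐ s ∂(𝒮.Fmix μ), ∀ a : CAction,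
      cUtil (posterior μ (𝒮.p s)) τ0 τ1 a ≤ cUtil (posterior μ (𝒮.p s)) τ0 τ1 (σ τ0 τ1 s)
  firm0opt : ∀ ψ : Measure ℝ, IsPriceStrategy ψ → 𝒮.Pi0 μ ψ φ1 σ ≤ 𝒮.Pi0 μ φ0 φ1 σ
  firm1opt : ∀ ψ : Measure ℝ, IsPriceStrategy ψ → 𝒮.Pi1 μ φ0 ψ σ ≤ 𝒮.Pi1 μ φ0 φ1 σ

/-- A deterrence equilibrium: an SPE in which some firm sells with probability zero. -/
def IsDeterrence (𝒮 : SignalStructure S) (μ : ℝ) (φ0 φ1 : Measure ℝ) (σ : CStrategy S) :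
    Prop :=
  𝒮.IsSPE μ φ0 φ1 σ ∧
    (𝒮.actProbMix μ φ0 φ1 σ CAction.buy0 = 0 ∨ 𝒮.actProbMix μ φ0 φ1 σ CAction.buy1 = 0)

/-- The market is full at `(μ, σ, τ₀, τ₁)` if the consumer exits with probability zero. -/
def MarketFull (𝒮 : SignalStructure S) (μ : ℝ) (σ : CStrategy S) (τ0 τ1 : ℝ) : Prop :=
  𝒮.Fmix μ {s | σ τ0 τ1 s = CAction.exit} = 0

open scoped Classical in
/-- The consumer's best-reply threshold `v_μ(τ₀,τ₁)` on the private belief. -/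
def v (𝒮 : SignalStructure S) (μ : ℝ) (σ : CStrategy S) (τ0 τ1 : ℝ) : ℝ :=
  if 𝒮.MarketFull μ σ τ0 τ1 then
    (1 - μ) * (1 + τ0 - τ1) / (2 * μ - (2 * μ - 1) * (1 + τ0 - τ1))
  else (1 - μ) * τ0 / (μ - (2 * μ - 1) * τ0)

end SignalStructure

namespace SignalStructure

variable {S : Type} [MeasurableSpace S] (𝒮 : SignalStructure S)

lemma p_nonneg (s : S) : 0 ≤ 𝒮.p s :=
  div_nonneg ENNReal.toReal_nonneg (add_nonneg ENNReal.toReal_nonneg ENNReal.toReal_nonneg)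

lemma p_le_one (s : S) : 𝒮.p s ≤ 1 :=
  div_le_one_of_le₀ (le_add_of_nonneg_right ENNReal.toReal_nonneg)
    (add_nonneg ENNReal.toReal_nonneg ENNReal.toReal_nonneg)

lemma F0_p_lt_eq_zero {x : ℝ} (hx : x < 𝒮.alphaLo) : 𝒮.F0 {s | 𝒮.p s < x} = 0 := by
  have := 𝒮.prob0
  by_contra h
  have hbdd : BddBelow {x | 0 < 𝒮.G0 x} := by
    refine ⟨0, fun y hy => ?_⟩
    by_contra! hy0
    have hempty : {s | 𝒮.p s < y} = ∅ :=
      eq_empty_of_forall_notMem fun s hs => (hy0.trans_le (𝒮.p_nonneg s)).not_gt hs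
    simp [G0, hempty] at hy
  exact hx.not_ge (csInf_le hbdd (ENNReal.toReal_pos h (measure_ne_top _ _)))

lemma ae_alphaLo_le_p : ∀ᵐ s ∂𝒮.F0, 𝒮.alphaLo ≤ 𝒮.p s := by
  have hunion : {s | ¬ 𝒮.alphaLo ≤ 𝒮.p s} =
      ⋃ n : ℕ, {s | 𝒮.p s < 𝒮.alphaLo - 1 / (n + 1)} := by
    ext s
    simp only [mem_ofPred_eq, not_le, mem_iUnion]
    constructor
    · intro h
      obtain ⟨n, hn⟩ := exists_nat_one_div_lt (sub_pos.2 h)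
      exact ⟨n, by linarith⟩
    · rintro ⟨n, hn⟩
      linarith [Nat.one_div_pos_of_nat (α := ℝ) (n := n)]
  rw [ae_iff, hunion]
  exact measure_iUnion_null fun n =>
    𝒮.F0_p_lt_eq_zero (by linarith [Nat.one_div_pos_of_nat (α := ℝ) (n := n)])

lemma Fmix_absolutelyContinuous (μ : ℝ) : 𝒮.Fmix μ ≪ 𝒮.F0 :=
  ((Measure.AbsolutelyContinuous.refl _).smul_left _).add_left (𝒮.ac10.smul_left _)

lemma isProbabilityMeasure_Fmix {μ : ℝ} (hμ : μ ∈ Icc (0:ℝ) 1) :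
    IsProbabilityMeasure (𝒮.Fmix μ) := by
  have := 𝒮.prob0
  have := 𝒮.prob1
  constructor
  simp only [Fmix, Measure.coe_add, Pi.add_apply, Measure.coe_smul, Pi.smul_apply,
    smul_eq_mul, measure_univ, mul_one]
  rw [← ENNReal.ofReal_add hμ.1 (by linarith [hμ.2])]
  norm_num

lemma actProb_le_one {μ : ℝ} (hμ : μ ∈ Icc (0:ℝ) 1) (σ : CStrategy S) (τ0 τ1 : ℝ)
    (a : CAction) : 𝒮.actProb μ σ τ0 τ1 a ≤ 1 :=
  have := 𝒮.isProbabilityMeasure_Fmix hμ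
  measureReal_le_one

end SignalStructure

lemma posterior_le_one {μ q : ℝ} (hμ : μ ∈ Icc (0:ℝ) 1) (hq : q ∈ Icc (0:ℝ) 1) :
    posterior μ q ≤ 1 := by
  have hrest : 0 ≤ (1 - μ) * (1 - q) := mul_nonneg (by linarith [hμ.2]) (by linarith [hq.2])
  exact div_le_one_of_le₀ (le_add_of_nonneg_right hrest)
    (add_nonneg (mul_nonneg hμ.1 hq.1) hrest)

lemma one_sub_div_le_posterior {μ c q : ℝ} (hc : 0 < c) (hμ : μ ∈ Ioc (0:ℝ) 1)
    (hq : q ∈ Icc c 1) : 1 - (1 - μ) / (μ * c) ≤ posterior μ q := by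
  obtain ⟨hμ0, hμ1⟩ := hμ
  obtain ⟨hcq, hq1⟩ := hq
  have hD : μ * c ≤ μ * q + (1 - μ) * (1 - q) := by nlinarith
  have hpost : posterior μ q = 1 - (1 - μ) * (1 - q) / (μ * q + (1 - μ) * (1 - q)) := by
    rw [posterior, eq_sub_iff_add_eq, ← add_div, div_self (by nlinarith)]
  rw [hpost]
  gcongr 1 - ?_
  exact div_le_div₀ (by linarith) (by nlinarith) (by positivity) hD

lemma cUtil_lt_buy0 {q τ0 τ1 : ℝ} (hq : q ≤ 1) (hτ1 : 0 ≤ τ1) (hτ0 : τ0 < 2 * q - 1)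
    {a : CAction} (ha : a ≠ CAction.buy0) : cUtil q τ0 τ1 a < cUtil q τ0 τ1 CAction.buy0 := by
  cases a <;> simp only [cUtil, ne_eq, not_true_eq_false] at ha ⊢ <;> linarith

lemma IsPriceStrategy.ae_mem_Icc {φ : Measure ℝ} (hφ : IsPriceStrategy φ) :
    ∀ᵐ t ∂φ, t ∈ Icc (0:ℝ) 1 := by
  have := hφ.1
  exact mem_ae_iff.2 ((prob_compl_eq_zero_iff measurableSet_Icc).2 hφ.2)

namespace SignalStructure

variable {S : Type} [MeasurableSpace S] {𝒮 : SignalStructure S} {μ : ℝ}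
  {φ0 φ1 : Measure ℝ} {σ : CStrategy S}

lemma IsSPE.actProb_buy0_eq_one (hS : 𝒮.IsSPE μ φ0 φ1 σ) (hμ : μ ∈ Icc (0:ℝ) 1)
    {τ0 τ1 : ℝ} (hτ0 : τ0 ∈ Icc (0:ℝ) 1) (hτ1 : τ1 ∈ Icc (0:ℝ) 1)
    (hbelief : ∀ᵐ s ∂𝒮.Fmix μ, τ0 < 2 * posterior μ (𝒮.p s) - 1) :
    𝒮.actProb μ σ τ0 τ1 CAction.buy0 = 1 := by
  have := 𝒮.isProbabilityMeasure_Fmix hμ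
  have hbuy : ∀ᵐ s ∂𝒮.Fmix μ, σ τ0 τ1 s = CAction.buy0 := by
    filter_upwards [hS.consumerBR τ0 hτ0 τ1 hτ1, hbelief] with s hBR hs
    by_contra ha
    exact (hBR CAction.buy0).not_gt
      (cUtil_lt_buy0 (posterior_le_one hμ ⟨𝒮.p_nonneg s, 𝒮.p_le_one s⟩) hτ1.1 hs ha)
  have hmeas : MeasurableSet {s | σ τ0 τ1 s = CAction.buy0} :=
    hS.meas τ0 τ1
      (show MeasurableSet[⊤] {CAction.buy0} from MeasurableSpace.measurableSet_top)
  rw [actProb, (ae_iff_measure_eq hmeas.nullMeasurableSet).1 hbuy, measure_univ,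
    ENNReal.toReal_one]

lemma IsSPE.Pi0_dirac_eq (hS : 𝒮.IsSPE μ φ0 φ1 σ) (hμ : μ ∈ Icc (0:ℝ) 1)
    {τ0 : ℝ} (hτ0 : τ0 ∈ Icc (0:ℝ) 1)
    (hbelief : ∀ᵐ s ∂𝒮.Fmix μ, τ0 < 2 * posterior μ (𝒮.p s) - 1) :
    𝒮.Pi0 μ (Measure.dirac τ0) φ1 σ = τ0 := by
  have := hS.strat1.1
  have hdirac : ∀ᵐ t ∂Measure.dirac τ0, t = τ0 := (ae_dirac_iff measurableSet_eq).2 rfl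
  have hae : ∀ᵐ τ ∂(Measure.dirac τ0).prod φ1,
      𝒮.actProb μ σ τ.1 τ.2 CAction.buy0 * τ.1 = τ0 := by
    filter_upwards [Measure.quasiMeasurePreserving_fst.ae hdirac,
      Measure.quasiMeasurePreserving_snd.ae hS.strat1.ae_mem_Icc] with τ h1 h2
    rw [h1, hS.actProb_buy0_eq_one hμ hτ0 h2 hbelief, one_mul]
  rw [Pi0, integral_congr_ae hae, integral_const, probReal_univ, one_smul]

lemma IsSPE.two_mul_sub_one_le_Pi0 (hS : 𝒮.IsSPE μ φ0 φ1 σ) (hμ : μ ∈ Icc (0:ℝ) 1)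
    {b : ℝ} (hb : 1 / 2 < b) (hbelief : ∀ᵐ s ∂𝒮.Fmix μ, b ≤ posterior μ (𝒮.p s)) :
    2 * b - 1 ≤ 𝒮.Pi0 μ φ0 φ1 σ := by
  have := 𝒮.isProbabilityMeasure_Fmix hμ
  obtain ⟨s, hs⟩ := hbelief.exists
  have hb1 : b ≤ 1 := hs.trans (posterior_le_one hμ ⟨𝒮.p_nonneg s, 𝒮.p_le_one s⟩)
  refine le_of_forall_lt_imp_le_of_dense fun t ht => ?_
  have hτ0 : max t 0 ∈ Icc (0:ℝ) 1 := ⟨le_max_right _ _, max_le (by linarith) zero_le_one⟩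
  have hdeviation : IsPriceStrategy (Measure.dirac (max t 0)) :=
    ⟨inferInstance, Measure.dirac_apply_of_mem hτ0⟩
  calc t ≤ max t 0 := le_max_left _ _
    _ = 𝒮.Pi0 μ (Measure.dirac (max t 0)) φ1 σ := by
      refine (hS.Pi0_dirac_eq hμ hτ0 ?_).symm
      filter_upwards [hbelief] with s hs
      exact (max_lt ht (by linarith)).trans_le (by linarith)
    _ ≤ 𝒮.Pi0 μ φ0 φ1 σ := hS.firm0opt _ hdeviation

variable (𝒮) in
lemma Pi0_le_one_sub_mul (hμ : μ ∈ Icc (0:ℝ) 1) (hφ0 : IsPriceStrategy φ0)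
    (φ1 : Measure ℝ) [IsProbabilityMeasure φ1] (σ : CStrategy S) (ε : ℝ) :
    𝒮.Pi0 μ φ0 φ1 σ ≤ 1 - ε * (1 - (φ0 (Icc (1 - ε) 1)).toReal) := by
  have := hφ0.1
  set A : Set (ℝ × ℝ) := Icc (1 - ε) 1 ×ˢ univ
  have hA : MeasurableSet A := measurableSet_Icc.prod MeasurableSet.univ
  have hbound : Integrable (fun τ => (1 - ε) + A.indicator (fun _ => ε) τ) (φ0.prod φ1) :=
    (integrable_const _).add ((integrable_const ε).indicator hA)
  have hτ0 := (Measure.quasiMeasurePreserving_fst (ν := φ1)).ae hφ0.ae_mem_Icc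
  calc 𝒮.Pi0 μ φ0 φ1 σ
      ≤ ∫ τ, (1 - ε) + A.indicator (fun _ => ε) τ ∂(φ0.prod φ1) := by
        refine integral_mono_of_nonneg ?_ hbound ?_
        · filter_upwards [hτ0] with τ hτ
          exact mul_nonneg ENNReal.toReal_nonneg hτ.1
        · filter_upwards [hτ0] with τ hτ
          have hsale : 𝒮.actProb μ σ τ.1 τ.2 CAction.buy0 * τ.1 ≤ τ.1 :=
            mul_le_of_le_one_left hτ.1 (𝒮.actProb_le_one hμ σ τ.1 τ.2 CAction.buy0)
          by_cases hmem : τ.1 ∈ Icc (1 - ε) 1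
          · rw [indicator_of_mem (show τ ∈ A from ⟨hmem, trivial⟩)]
            linarith [hτ.2]
          · rw [indicator_of_notMem (show τ ∉ A from fun h => hmem h.1)]
            have : τ.1 < 1 - ε := by
              by_contra!
              exact hmem ⟨this, hτ.2⟩
            linarith
    _ = 1 - ε * (1 - (φ0 (Icc (1 - ε) 1)).toReal) := by
      rw [integral_add (integrable_const _) ((integrable_const ε).indicator hA),
        integral_const, integral_indicator_const _ hA]
      simp only [A, measureReal_def, Measure.prod_prod, measure_univ, mul_one,
        ENNReal.toReal_one, smul_eq_mul]
      ring

end SignalStructure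

theorem stmt11_general {S : Type} [MeasurableSpace S] (𝒮 : SignalStructure S)
    (hb : 𝒮.Bounded)
    (μseq : ℕ → ℝ) (hμ : ∀ k, μseq k ∈ Ioo (0:ℝ) 1)
    (hlim : Tendsto μseq atTop (𝓝 1))
    (φ0 φ1 : ℕ → Measure ℝ) (σ : ℕ → CStrategy S)
    (hSPE : ∀ k, 𝒮.IsSPE (μseq k) (φ0 k) (φ1 k) (σ k)) :
    ∀ ε > (0:ℝ),
      Tendsto (fun k => ((φ0 k) (Icc (1 - ε) 1)).toReal) atTop (𝓝 1) := by
  intro ε hε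
  set r : ℕ → ℝ := fun k => (1 - μseq k) / (μseq k * 𝒮.alphaLo)
  have hr : Tendsto r atTop (𝓝 0) := by
    have := ((tendsto_const_nhds (x := (1:ℝ))).sub hlim).div (hlim.mul_const 𝒮.alphaLo)
      (by simp [hb.1.ne'])
    rwa [sub_self, zero_div] at this
  have hbelief (k : ℕ) :
      ∀ᵐ s ∂𝒮.Fmix (μseq k), 1 - r k ≤ posterior (μseq k) (𝒮.p s) :=
    (𝒮.Fmix_absolutelyContinuous _).ae_le <| 𝒮.ae_alphaLo_le_p.mono fun s hs =>
      one_sub_div_le_posterior hb.1 (Ioo_subset_Ioc_self (hμ k)) ⟨hs, 𝒮.p_le_one s⟩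
  have hlower : ∀ᶠ k in atTop, 1 - 2 * r k / ε ≤ ((φ0 k) (Icc (1 - ε) 1)).toReal := by
    filter_upwards [hr.eventually (gt_mem_nhds (by norm_num : (0:ℝ) < 1 / 2))] with k hk
    have hμk := Ioo_subset_Icc_self (hμ k)
    have := (hSPE k).strat1.1
    have hlow := (hSPE k).two_mul_sub_one_le_Pi0 hμk (by linarith) (hbelief k)
    have hup := 𝒮.Pi0_le_one_sub_mul hμk (hSPE k).strat0 (φ1 k) (σ k) ε
    rw [sub_le_comm, le_div_iff₀ hε]
    linarith
  have hupper (k : ℕ) : ((φ0 k) (Icc (1 - ε) 1)).toReal ≤ 1 :=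
    have := (hSPE k).strat0.1
    measureReal_le_one
  refine tendsto_of_tendsto_of_tendsto_of_le_of_le' ?_ tendsto_const_nhds hlower
    (Eventually.of_forall hupper)
  simpa using tendsto_const_nhds.sub ((hr.const_mul 2).div_const ε)

/-- With bounded signals, along any sequence of priors μ_k → 1 and SPEs
of Γ(μ_k), Firm 0's equilibrium price converges to 1: for every ε > 0,
φ₀ᵏ([1−ε,1]) → 1. -/
theorem stmt11 {S : Type} [MeasurableSpace S] (𝒮 : SignalStructure S)
    (g0 g1 : ℝ → ℝ) (hA : 𝒮.Assumption1 g0 g1)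
    (hb : 𝒮.Bounded)
    (μseq : ℕ → ℝ) (hμ : ∀ k, μseq k ∈ Ioo (0:ℝ) 1)
    (hlim : Tendsto μseq atTop (𝓝 1))
    (φ0 φ1 : ℕ → Measure ℝ) (σ : ℕ → CStrategy S)
    (hSPE : ∀ k, 𝒮.IsSPE (μseq k) (φ0 k) (φ1 k) (σ k)) :
    ∀ ε > (0:ℝ),
      Tendsto (fun k => ((φ0 k) (Icc (1 - ε) 1)).toReal) atTop (𝓝 1) :=
  stmt11_general 𝒮 hb μseq hμ hlim φ0 φ1 σ hSPE
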